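/- arXiv:1012.1346 — 3 statements merged into one kernel-verified Lean document; each statement's English description precedes it below -/
import Mathlib

section
/- Let d ≥ 2, 1 < p < 2d/(d-1), and let q = q(p,d) be defined by 1/q = ((d-1)/(d+1))(1 - 1/p). Let f ∈ L^p(ℝ^{d-1}) be such that |Ef|^{q-1} is integrable over ℝ^d, where Ef(x,t) = ∫_{ℝ^{d-1}} e^{-i x·y} e^{-i t|y|²/2} f(y) dy, and suppose there is λ ∈ ℂ such that for almost every y ∈ ℝ^{d-1}: ∫_{ℝ^d} e^{i(x·y + t|y|²/2)} |Ef(x,t)|^{q-2} Ef(x,t) dx dt = λ |f(y)|^{p-2} f(y). Then for every ρ ∈ ℂ∖{0}, every r > 0, every orthogonal matrix A ∈ O(d-1), and every v, w ∈ ℝ^{d-1}, the function g(y) = ρ f(rAy + v) e^{i y·w} also belongs to L^p(ℝ^{d-1}), |Eg|^{q-1} is integrable over ℝ^d, and there is λ' ∈ ℂ such that for almost every y ∈ ℝ^{d-1}: ∫_{ℝ^d} e^{i(x·y + t|y|²/2)} |Eg(x,t)|^{q-2} Eg(x,t) dx dt = λ' |g(y)|^{p-2} g(y). -/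
/-!
Write `φ(z, y) = ⟪x, y⟫ + t ‖y‖² / 2` for `z = (x, t)`, so that `Ef z = ∫ e^{-iφ(z, y)} f y dy`
and the Euler–Lagrange kernel is `e^{iφ(z, y)}`. For `u = r A y + v` one has the algebraic identity
`φ(z, y) + φ(ψ z, v) = ⟪y, w⟫ + φ(ψ z, u)`, where the affine space-time map `ψ` is a
rotation-translation followed by a Galilean boost and a parabolic dilation. Substituting `u` in the
integral defining `Eg` gives `Eg = |r|⁻ⁿ ρ e^{iφ(ψ ·, v)} (Ef ∘ ψ)`. Since `ψ` multiplies Lebesgue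
measure by a constant, `|Eg|^{q-1}` is integrable, and changing variables by `ψ` turns the
Euler–Lagrange integral of `g` at `y` into a constant times `e^{i⟪y, w⟫}` times that of `f` at `u`,
which matches `|g y|^{p-2} g y` since `|g y| = |ρ| |f u|`.
-/

open MeasureTheory Complex
open scoped ENNReal RealInnerProductSpace

/-- The adjoint Fourier restriction (extension) operator of the paraboloid
`P^{n} = {(y, |y|²/2) : y ∈ ℝ^{n}} ⊂ ℝ^{n+1}`, viewed as an operator on functions
on `ℝ^{n}`: `Ef(x,t) = ∫ e^{-ix·y} e^{-it|y|²/2} f(y) dy`. -/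
noncomputable def parExt (n : ℕ) (f : EuclideanSpace ℝ (Fin n) → ℂ) :
    EuclideanSpace ℝ (Fin n) × ℝ → ℂ :=
  fun z => ∫ y : EuclideanSpace ℝ (Fin n),
    Complex.exp (-(Complex.I * ((⟪z.1, y⟫ : ℝ) : ℂ))
      - Complex.I * (z.2 : ℂ) * ((‖y‖ ^ 2 : ℝ) : ℂ) / 2) * f y

noncomputable section Geometry

variable {E : Type*} [NormedAddCommGroup E] [InnerProductSpace ℝ E]

def paraboloidPhase (z : E × ℝ) (y : E) : ℝ := ⟪z.1, y⟫ + z.2 * (‖y‖ ^ 2 / 2)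

def galileanBoost (u : E) (z : E × ℝ) : E × ℝ := (z.1 - z.2 • u, z.2)

def parabolicDilation (c : ℝ) (z : E × ℝ) : E × ℝ := (c • z.1, c ^ 2 * z.2)

def spacetimeMap (r : ℝ) (A : E ≃ₗᵢ[ℝ] E) (v w : E) (z : E × ℝ) : E × ℝ :=
  parabolicDilation r⁻¹ (galileanBoost (r⁻¹ • v) (A (z.1 - w), z.2))

variable {r : ℝ} (A : E ≃ₗᵢ[ℝ] E) (v w : E)

theorem paraboloidPhase_add_paraboloidPhase_spacetimeMap (hr : r ≠ 0) (z : E × ℝ) (y : E) :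
    paraboloidPhase z y + paraboloidPhase (spacetimeMap r A v w z) v
      = ⟪y, w⟫ + paraboloidPhase (spacetimeMap r A v w z) (r • A y + v) := by
  simp only [paraboloidPhase, spacetimeMap, parabolicDilation, galileanBoost]
  rw [norm_add_sq_real, norm_smul]
  simp only [inner_sub_left, inner_add_right, real_inner_smul_left, real_inner_smul_right,
    LinearIsometryEquiv.inner_map_map, LinearIsometryEquiv.norm_map, real_inner_self_eq_norm_sq,
    Real.norm_eq_abs, mul_pow, sq_abs, map_sub]
  rw [real_inner_comm w y, real_inner_comm (A y) v]
  field_simp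
  ring

theorem galileanBoost_neg_galileanBoost (u : E) (z : E × ℝ) :
    galileanBoost (-u) (galileanBoost u z) = z := by
  simp [galileanBoost]

theorem spacetimeMap_injective (hr : r ≠ 0) : Function.Injective (spacetimeMap r A v w) := by
  have hdil : Function.Injective (parabolicDilation (E := E) r⁻¹) :=
    ((smul_right_injective E (inv_ne_zero hr)).prodMap
      (mul_right_injective₀ (pow_ne_zero 2 (inv_ne_zero hr))))
  have hboost : Function.Injective (galileanBoost (r⁻¹ • v)) :=
    Function.LeftInverse.injective (galileanBoost_neg_galileanBoost _)
  have hrot : Function.Injective (fun z : E × ℝ => (A (z.1 - w), z.2)) :=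
    (A.injective.comp (sub_left_injective)).prodMap Function.injective_id
  exact hdil.comp (hboost.comp hrot)

end Geometry

section ChangeOfVariables

variable {E : Type*} [NormedAddCommGroup E] [InnerProductSpace ℝ E] [FiniteDimensional ℝ E]
  [MeasurableSpace E] [BorelSpace E]

local notation "n" => Module.finrank ℝ E

theorem measurePreserving_smul_linearIsometry_add {r : ℝ} (hr : r ≠ 0) (A : E ≃ₗᵢ[ℝ] E)
    (v : E) :
    MeasurePreserving (fun y => r • A y + v) volume (ENNReal.ofReal (|r| ^ n)⁻¹ • volume) := by
  have hsmul : MeasurePreserving (fun y : E => r • y) volume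
      (ENNReal.ofReal (|r| ^ n)⁻¹ • volume) := by
    refine ⟨by fun_prop, ?_⟩
    rw [Measure.map_addHaar_smul volume hr, abs_inv, abs_pow]
  have htrans : MeasurePreserving (· + v) (ENNReal.ofReal (|r| ^ n)⁻¹ • (volume : Measure E))
      (ENNReal.ofReal (|r| ^ n)⁻¹ • volume) := by
    refine ⟨by fun_prop, ?_⟩
    rw [Measure.map_smul, (measurePreserving_add_right volume v).map_eq]
  exact htrans.comp (hsmul.comp A.measurePreserving)

theorem measurableEmbedding_smul_linearIsometry_add {r : ℝ} (hr : r ≠ 0) (A : E ≃ₗᵢ[ℝ] E)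
    (v : E) : MeasurableEmbedding (fun y => r • A y + v) :=
  Continuous.measurableEmbedding (by fun_prop)
    ((add_left_injective v).comp ((smul_right_injective E hr).comp A.injective))

theorem integral_comp_smul_linearIsometry_add {F : Type*} [NormedAddCommGroup F]
    [NormedSpace ℝ F] {r : ℝ} (hr : r ≠ 0) (A : E ≃ₗᵢ[ℝ] E) (v : E) (K : E → F) :
    ∫ y, K (r • A y + v) = (|r| ^ n)⁻¹ • ∫ y, K y := by
  rw [(measurePreserving_smul_linearIsometry_add hr A v).integral_comp
    (measurableEmbedding_smul_linearIsometry_add hr A v), integral_smul_measure,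
    ENNReal.toReal_ofReal (by positivity)]

theorem measurePreserving_galileanBoost (u : E) :
    MeasurePreserving (galileanBoost u) (volume : Measure (E × ℝ)) volume := by
  have hskew : MeasurePreserving (fun p : ℝ × E => (p.1, p.2 - p.1 • u)) := by
    refine (MeasurePreserving.id volume).skew_product (g := fun t x => x - t • u)
      (by fun_prop : Continuous fun p : ℝ × E => p.2 - p.1 • u).measurable
      (Filter.Eventually.of_forall fun t => ?_)
    exact (measurePreserving_sub_right volume (t • u)).map_eq
  exact Measure.measurePreserving_swap.comp (hskew.comp Measure.measurePreserving_swap)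

theorem measurePreserving_parabolicDilation {c : ℝ} (hc : c ≠ 0) :
    MeasurePreserving (parabolicDilation c) (volume : Measure (E × ℝ))
      (ENNReal.ofReal (|c| ^ (n + 2))⁻¹ • volume) := by
  have hx : MeasurePreserving (fun x : E => c • x) volume
      (ENNReal.ofReal (|c| ^ n)⁻¹ • volume) := by
    refine ⟨by fun_prop, ?_⟩
    rw [Measure.map_addHaar_smul volume hc, abs_inv, abs_pow]
  have ht : MeasurePreserving (fun t : ℝ => c ^ 2 * t) volume
      (ENNReal.ofReal (|c| ^ 2)⁻¹ • volume) := by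
    refine ⟨by fun_prop, ?_⟩
    rw [Real.map_volume_mul_left (pow_ne_zero 2 hc), abs_inv, abs_pow]
  have := hx.prod ht
  rwa [Measure.prod_smul_left, Measure.prod_smul_right, smul_smul,
    ← ENNReal.ofReal_mul (by positivity), ← mul_inv, ← pow_add,
    ← Measure.volume_eq_prod] at this

theorem measurePreserving_spacetimeMap {r : ℝ} (hr : r ≠ 0) (A : E ≃ₗᵢ[ℝ] E) (v w : E) :
    MeasurePreserving (spacetimeMap r A v w) volume
      (ENNReal.ofReal (|r| ^ (n + 2)) • volume) := by
  have hrot : MeasurePreserving (fun z : E × ℝ => (A (z.1 - w), z.2)) volume volume :=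
    (A.measurePreserving.comp (measurePreserving_sub_right volume w)).prod
      (MeasurePreserving.id volume)
  have := (measurePreserving_parabolicDilation (E := E) (inv_ne_zero hr)).comp
    ((measurePreserving_galileanBoost (r⁻¹ • v)).comp hrot)
  rwa [abs_inv, inv_pow, inv_inv] at this

theorem integral_comp_spacetimeMap {F : Type*} [NormedAddCommGroup F] [NormedSpace ℝ F]
    {r : ℝ} (hr : r ≠ 0) (A : E ≃ₗᵢ[ℝ] E) (v w : E) (K : E × ℝ → F) :
    ∫ z, K (spacetimeMap r A v w z) = |r| ^ (n + 2) • ∫ z, K z := by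
  rw [(measurePreserving_spacetimeMap hr A v w).integral_comp
    (Continuous.measurableEmbedding
      (by unfold spacetimeMap parabolicDilation galileanBoost; fun_prop)
      (spacetimeMap_injective A v w hr)), integral_smul_measure,
    ENNReal.toReal_ofReal (by positivity)]

theorem memLp_modulate_comp_smul_linearIsometry_add {p : ℝ≥0∞} {f : E → ℂ} (hf : MemLp f p)
    (ρ : ℂ) {r : ℝ} (hr : r ≠ 0) (A : E ≃ₗᵢ[ℝ] E) (v w : E) :
    MemLp (fun y => ρ * f (r • A y + v) * exp (I * ⟪y, w⟫)) p := by
  have hcomp : MemLp (fun y => ρ * f (r • A y + v)) p :=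
    ((hf.smul_measure ENNReal.ofReal_ne_top).comp_measurePreserving
      (measurePreserving_smul_linearIsometry_add hr A v)).const_mul ρ
  refine hcomp.of_le (hcomp.1.mul (by fun_prop)) (Filter.Eventually.of_forall fun y => ?_)
  rw [norm_mul _ (exp _), norm_exp_I_mul_ofReal, mul_one]

end ChangeOfVariables

section Transfer

variable {E : Type*} [NormedAddCommGroup E] [InnerProductSpace ℝ E] {r : ℝ} {A : E ≃ₗᵢ[ℝ] E}
  {v w : E} {a : ℂ} {F G : E × ℝ → ℂ}

theorem norm_eq_of_eq_mul_comp_spacetimeMap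
    (hG : ∀ z, G z = a * exp (I * paraboloidPhase (spacetimeMap r A v w z) v)
      * F (spacetimeMap r A v w z)) (z : E × ℝ) :
    ‖G z‖ = ‖a‖ * ‖F (spacetimeMap r A v w z)‖ := by
  rw [hG, norm_mul, norm_mul, norm_exp_I_mul_ofReal, mul_one]

variable [FiniteDimensional ℝ E] [MeasurableSpace E] [BorelSpace E]

local notation "n" => Module.finrank ℝ E

theorem integrable_rpow_norm_of_eq_mul_comp_spacetimeMap (hr : r ≠ 0)
    (hG : ∀ z, G z = a * exp (I * paraboloidPhase (spacetimeMap r A v w z) v)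
      * F (spacetimeMap r A v w z)) {s : ℝ} (hF : Integrable fun z => ‖F z‖ ^ s) :
    Integrable fun z => ‖G z‖ ^ s := by
  simp_rw [norm_eq_of_eq_mul_comp_spacetimeMap hG, Real.mul_rpow (norm_nonneg _) (norm_nonneg _)]
  exact ((measurePreserving_spacetimeMap hr A v w).integrable_comp_of_integrable
    (hF.smul_measure ENNReal.ofReal_ne_top)).const_mul _

theorem integral_eulerLagrange_of_eq_mul_comp_spacetimeMap (hr : r ≠ 0)
    (hG : ∀ z, G z = a * exp (I * paraboloidPhase (spacetimeMap r A v w z) v)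
      * F (spacetimeMap r A v w z)) (q : ℝ) (y : E) :
    ∫ z, exp (I * ((⟪z.1, y⟫ + z.2 * (‖y‖ ^ 2 / 2) : ℝ) : ℂ))
        * ((‖G z‖ ^ (q - 2) : ℝ) : ℂ) * G z
      = ((‖a‖ ^ (q - 2) * |r| ^ (n + 2) : ℝ) : ℂ) * a * exp (I * ⟪y, w⟫) *
        ∫ z, exp (I * ((⟪z.1, r • A y + v⟫ + z.2 * (‖r • A y + v‖ ^ 2 / 2) : ℝ) : ℂ))
          * ((‖F z‖ ^ (q - 2) : ℝ) : ℂ) * F z := by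
  set K : E × ℝ → ℂ := fun z => exp (I * paraboloidPhase z (r • A y + v))
    * ((‖F z‖ ^ (q - 2) : ℝ) : ℂ) * F z
  have hpointwise (z : E × ℝ) :
      exp (I * paraboloidPhase z y) * ((‖G z‖ ^ (q - 2) : ℝ) : ℂ) * G z
        = ((‖a‖ ^ (q - 2) : ℝ) : ℂ) * a * exp (I * ⟪y, w⟫) * K (spacetimeMap r A v w z) := by
    have hphase : exp (I * paraboloidPhase z y)
          * exp (I * paraboloidPhase (spacetimeMap r A v w z) v)
        = exp (I * ⟪y, w⟫)
          * exp (I * paraboloidPhase (spacetimeMap r A v w z) (r • A y + v)) := by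
      rw [← exp_add, ← exp_add, ← mul_add, ← mul_add, ← ofReal_add, ← ofReal_add,
        paraboloidPhase_add_paraboloidPhase_spacetimeMap A v w hr]
    rw [norm_eq_of_eq_mul_comp_spacetimeMap hG, Real.mul_rpow (norm_nonneg _) (norm_nonneg _),
      hG]
    simp only [K]
    push_cast
    linear_combination (((‖a‖ ^ (q - 2) : ℝ) : ℂ) * a
      * ((‖F (spacetimeMap r A v w z)‖ ^ (q - 2) : ℝ) : ℂ) * F (spacetimeMap r A v w z)) * hphase
  calc _ = ∫ z, ((‖a‖ ^ (q - 2) : ℝ) : ℂ) * a * exp (I * ⟪y, w⟫) * K (spacetimeMap r A v w z) :=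
        integral_congr_ae (Filter.Eventually.of_forall hpointwise)
    _ = _ := by
      rw [integral_const_mul, integral_comp_spacetimeMap hr, real_smul]
      simp only [K, paraboloidPhase]
      push_cast
      ring

end Transfer

section Extension

variable {n : ℕ}

theorem parExt_eq_integral_paraboloidPhase (f : EuclideanSpace ℝ (Fin n) → ℂ)
    (z : EuclideanSpace ℝ (Fin n) × ℝ) :
    parExt n f z = ∫ y, exp (-(I * paraboloidPhase z y)) * f y := by
  unfold parExt paraboloidPhase
  congr 1 with y
  push_cast
  ring_nf

theorem parExt_modulate_comp_smul_linearIsometry_add (f : EuclideanSpace ℝ (Fin n) → ℂ)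
    (ρ : ℂ) {r : ℝ} (hr : r ≠ 0) (A : EuclideanSpace ℝ (Fin n) ≃ₗᵢ[ℝ] EuclideanSpace ℝ (Fin n))
    (v w : EuclideanSpace ℝ (Fin n)) (z : EuclideanSpace ℝ (Fin n) × ℝ) :
    parExt n (fun y => ρ * f (r • A y + v) * exp (I * ⟪y, w⟫)) z
      = (((|r| ^ n)⁻¹ : ℝ) : ℂ) * ρ * exp (I * paraboloidPhase (spacetimeMap r A v w z) v)
        * parExt n f (spacetimeMap r A v w z) := by
  have hpointwise (y : EuclideanSpace ℝ (Fin n)) :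
      exp (-(I * paraboloidPhase z y)) * (ρ * f (r • A y + v) * exp (I * ⟪y, w⟫))
        = ρ * exp (I * paraboloidPhase (spacetimeMap r A v w z) v)
          * (exp (-(I * paraboloidPhase (spacetimeMap r A v w z) (r • A y + v)))
            * f (r • A y + v)) := by
    have hphase : exp (-(I * paraboloidPhase z y)) * exp (I * ⟪y, w⟫)
        = exp (I * paraboloidPhase (spacetimeMap r A v w z) v)
          * exp (-(I * paraboloidPhase (spacetimeMap r A v w z) (r • A y + v))) := by
      rw [← exp_add, ← exp_add]
      congr 1
      have := congrArg ((↑) : ℝ → ℂ)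
        (paraboloidPhase_add_paraboloidPhase_spacetimeMap A v w hr z y)
      push_cast at this
      linear_combination (-I) * this
    linear_combination (ρ * f (r • A y + v)) * hphase
  rw [parExt_eq_integral_paraboloidPhase,
    integral_congr_ae (Filter.Eventually.of_forall hpointwise), integral_const_mul,
    integral_comp_smul_linearIsometry_add hr A v
      (fun u => exp (-(I * paraboloidPhase (spacetimeMap r A v w z) u)) * f u),
    ← parExt_eq_integral_paraboloidPhase, finrank_euclideanSpace_fin, real_smul]
  ring

end Extension

theorem ofReal_inv_rpow_norm_mul_rpow_norm_mul_self (ρ : ℂ) (s : ℝ) :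
    (((‖ρ‖ ^ s)⁻¹ : ℝ) : ℂ) * ((‖ρ‖ ^ s : ℝ) : ℂ) * ρ = ρ := by
  rcases eq_or_ne ρ 0 with rfl | hρ
  · rw [mul_zero]
  · rw [← ofReal_mul, inv_mul_cancel₀ (Real.rpow_pos_of_pos (norm_pos_iff.2 hρ) s).ne',
      ofReal_one, one_mul]

theorem euler_lagrange_symmetry_general (d : ℕ) (p q : ℝ)
    (f : EuclideanSpace ℝ (Fin (d - 1)) → ℂ)
    (hf : MemLp f (ENNReal.ofReal p))
    (hfint : Integrable (fun z : EuclideanSpace ℝ (Fin (d - 1)) × ℝ =>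
      ‖parExt (d - 1) f z‖ ^ (q - 1)))
    (lam : ℂ)
    (hEL : ∀ᵐ y : EuclideanSpace ℝ (Fin (d - 1)),
      ∫ z : EuclideanSpace ℝ (Fin (d - 1)) × ℝ,
          Complex.exp (Complex.I * ((⟪z.1, y⟫ + z.2 * (‖y‖ ^ 2 / 2) : ℝ) : ℂ))
            * ((‖parExt (d - 1) f z‖ ^ (q - 2) : ℝ) : ℂ) * parExt (d - 1) f z
        = lam * ((‖f y‖ ^ (p - 2) : ℝ) : ℂ) * f y)
    (ρ : ℂ) (r : ℝ) (hr : 0 < r)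
    (A : EuclideanSpace ℝ (Fin (d - 1)) ≃ₗᵢ[ℝ] EuclideanSpace ℝ (Fin (d - 1)))
    (v w : EuclideanSpace ℝ (Fin (d - 1))) :
    ∀ g : EuclideanSpace ℝ (Fin (d - 1)) → ℂ,
      (∀ y, g y = ρ * f (r • A y + v) * Complex.exp (Complex.I * ((⟪y, w⟫ : ℝ) : ℂ))) →
      MemLp g (ENNReal.ofReal p) ∧
      Integrable (fun z : EuclideanSpace ℝ (Fin (d - 1)) × ℝ =>
        ‖parExt (d - 1) g z‖ ^ (q - 1)) ∧
      ∃ lam' : ℂ, ∀ᵐ y : EuclideanSpace ℝ (Fin (d - 1)),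
        ∫ z : EuclideanSpace ℝ (Fin (d - 1)) × ℝ,
            Complex.exp (Complex.I * ((⟪z.1, y⟫ + z.2 * (‖y‖ ^ 2 / 2) : ℝ) : ℂ))
              * ((‖parExt (d - 1) g z‖ ^ (q - 2) : ℝ) : ℂ) * parExt (d - 1) g z
          = lam' * ((‖g y‖ ^ (p - 2) : ℝ) : ℂ) * g y := by
  intro g hg
  obtain rfl : g = fun y => ρ * f (r • A y + v) * exp (I * ⟪y, w⟫) := funext hg
  have hEg := parExt_modulate_comp_smul_linearIsometry_add f ρ hr.ne' A v w
  set a : ℂ := (((|r| ^ (d - 1))⁻¹ : ℝ) : ℂ) * ρ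
  refine ⟨memLp_modulate_comp_smul_linearIsometry_add hf ρ hr.ne' A v w,
    integrable_rpow_norm_of_eq_mul_comp_spacetimeMap hr.ne' hEg hfint,
    ((‖a‖ ^ (q - 2) * |r| ^ (Module.finrank ℝ (EuclideanSpace ℝ (Fin (d - 1))) + 2) : ℝ) : ℂ)
      * (((|r| ^ (d - 1))⁻¹ : ℝ) : ℂ) * lam * (((‖ρ‖ ^ (p - 2))⁻¹ : ℝ) : ℂ), ?_⟩
  filter_upwards [(measurePreserving_smul_linearIsometry_add hr.ne' A v).quasiMeasurePreserving.ae
    (Measure.ae_smul_measure hEL _)] with y hy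
  rw [integral_eulerLagrange_of_eq_mul_comp_spacetimeMap hr.ne' hEg, hy,
    norm_mul (ρ * _) (exp _), norm_mul ρ, norm_exp_I_mul_ofReal, mul_one,
    Real.mul_rpow (norm_nonneg _) (norm_nonneg _), ofReal_mul (‖ρ‖ ^ (p - 2))]
  set C : ℂ :=
    ((‖a‖ ^ (q - 2) * |r| ^ (Module.finrank ℝ (EuclideanSpace ℝ (Fin (d - 1))) + 2) : ℝ) : ℂ)
  linear_combination (-C * (((|r| ^ (d - 1))⁻¹ : ℝ) : ℂ) * lam
    * ((‖f (r • A y + v)‖ ^ (p - 2) : ℝ) : ℂ) * f (r • A y + v) * exp (I * ⟪y, w⟫))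
    * ofReal_inv_rpow_norm_mul_rpow_norm_mul_self ρ (p - 2)

/-- the symmetries of the Euler-Lagrange equation for the
adjoint Fourier restriction functional on the paraboloid: if `f` satisfies the
equation, then so does `g(y) = ρ f(rAy + v) e^{iy·w}`. -/
theorem euler_lagrange_symmetry (d : ℕ) (hd : 2 ≤ d) (p q : ℝ)
    (hp1 : 1 < p) (hp2 : p < 2 * (d : ℝ) / ((d : ℝ) - 1))
    (hq : 1 / q = (((d : ℝ) - 1) / ((d : ℝ) + 1)) * (1 - 1 / p))
    (f : EuclideanSpace ℝ (Fin (d - 1)) → ℂ)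
    (hf : MemLp f (ENNReal.ofReal p))
    (hfint : Integrable (fun z : EuclideanSpace ℝ (Fin (d - 1)) × ℝ =>
      ‖parExt (d - 1) f z‖ ^ (q - 1)))
    (lam : ℂ)
    (hEL : ∀ᵐ y : EuclideanSpace ℝ (Fin (d - 1)),
      ∫ z : EuclideanSpace ℝ (Fin (d - 1)) × ℝ,
          Complex.exp (Complex.I * ((⟪z.1, y⟫ + z.2 * (‖y‖ ^ 2 / 2) : ℝ) : ℂ))
            * ((‖parExt (d - 1) f z‖ ^ (q - 2) : ℝ) : ℂ) * parExt (d - 1) f z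
        = lam * ((‖f y‖ ^ (p - 2) : ℝ) : ℂ) * f y)
    (ρ : ℂ) (hρ : ρ ≠ 0) (r : ℝ) (hr : 0 < r)
    (A : EuclideanSpace ℝ (Fin (d - 1)) ≃ₗᵢ[ℝ] EuclideanSpace ℝ (Fin (d - 1)))
    (v w : EuclideanSpace ℝ (Fin (d - 1))) :
    ∀ g : EuclideanSpace ℝ (Fin (d - 1)) → ℂ,
      (∀ y, g y = ρ * f (r • A y + v) * Complex.exp (Complex.I * ((⟪y, w⟫ : ℝ) : ℂ))) →
      MemLp g (ENNReal.ofReal p) ∧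
      Integrable (fun z : EuclideanSpace ℝ (Fin (d - 1)) × ℝ =>
        ‖parExt (d - 1) g z‖ ^ (q - 1)) ∧
      ∃ lam' : ℂ, ∀ᵐ y : EuclideanSpace ℝ (Fin (d - 1)),
        ∫ z : EuclideanSpace ℝ (Fin (d - 1)) × ℝ,
            Complex.exp (Complex.I * ((⟪z.1, y⟫ + z.2 * (‖y‖ ^ 2 / 2) : ℝ) : ℂ))
              * ((‖parExt (d - 1) g z‖ ^ (q - 2) : ℝ) : ℂ) * parExt (d - 1) g z
          = lam' * ((‖g y‖ ^ (p - 2) : ℝ) : ℂ) * g y :=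
  euler_lagrange_symmetry_general d p q f hf hfint lam hEL ρ r hr A v w
end

section
/- Let d ≥ 2 be an integer, let q > 1 be real, and let a ≥ 0. Then ∫_ℝ (1+it)^{-1} (1-it)^{(d-3)/2} (q-1-it)^{-(d-1)/2} exp(a(it - (1+t²)/(q-1-it))) dt = 2π · 2^{(d-3)/2} · q^{-(d-1)/2} · e^{-a}, where all complex powers are principal branch (each base has positive real part for t ∈ ℝ). -/
/-!
Write the integrand as `G t / (1 + i t)`, where `G` is holomorphic near the closed upper
half-plane and `G z = O(1/|z|)` there: the two powers together decay like `1/|z|`, and the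
exponential factor has modulus at most `1`. Subtracting the principal part `2 G(i) / (1 + z²)`
of the pole at `z = i` leaves a function that is holomorphic on the closed upper half-plane and
`O(1/|z|²)`, so its integral over `ℝ` vanishes (Cauchy's theorem on the rectangles
`[-R, R] × [0, R]`). The principal part integrates to `2π G(i)`, and
`G(i) = 2^((d-3)/2) q^(-(d-1)/2) e^(-a)`.
-/

open MeasureTheory Complex Set Filter Topology
open scoped Real

lemma norm_intervalIntegral_le_of_upper_bound {h : ℂ → ℂ} {M R : ℝ}
    (hh : DifferentiableOn ℂ h {z | 0 ≤ z.im}) (hR : 0 < R)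
    (hM : ∀ z : ℂ, 0 ≤ z.im → R ≤ ‖z‖ → ‖h z‖ ≤ M) :
    ‖∫ x : ℝ in -R..R, h x‖ ≤ 4 * R * M := by
  have hrect := integral_boundary_rect_eq_zero_of_differentiableOn h ⟨-R, 0⟩ ⟨R, R⟩
    (hh.mono fun z hz => by
      rw [mem_reProdIm, uIcc_of_le hR.le] at hz
      exact hz.2.1)
  simp only [ofReal_zero, zero_mul, add_zero] at hrect
  have htop : ‖∫ x : ℝ in -R..R, h (x + R * I)‖ ≤ M * (2 * R) := by
    refine (intervalIntegral.norm_integral_le_of_norm_le_const fun x _ => hM _ ?_ ?_).trans_eq ?_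
    · simp [hR.le]
    · simpa [abs_of_pos hR] using abs_im_le_norm (x + R * I)
    · rw [abs_of_pos (by linarith)]; ring
  have hside : ∀ s : ℝ, |s| = R → ‖∫ y : ℝ in (0 : ℝ)..R, h (s + y * I)‖ ≤ M * R := by
    intro s hs
    refine (intervalIntegral.norm_integral_le_of_norm_le_const fun y hy => hM _ ?_ ?_).trans_eq ?_
    · rw [uIoc_of_le hR.le] at hy
      simpa using hy.1.le
    · simpa [hs] using abs_re_le_norm (s + y * I)
    · rw [sub_zero, abs_of_pos hR]
  have hleft := hside (-R) (by rw [abs_neg, abs_of_pos hR])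
  have hright := hside R (abs_of_pos hR)
  push_cast at hleft
  rw [show ∫ x : ℝ in -R..R, h x = (∫ x : ℝ in -R..R, h (x + R * I))
      - I • (∫ y : ℝ in (0 : ℝ)..R, h (R + y * I)) + I • ∫ y : ℝ in (0 : ℝ)..R, h (-R + y * I) by
    push_cast at hrect; linear_combination hrect]
  refine (norm_add_le _ _).trans ((add_le_add_left (norm_sub_le _ _) _).trans ?_)
  rw [norm_smul, norm_smul, norm_I, one_mul, one_mul]
  linarith

theorem integral_eq_zero_of_upper_decay {h : ℂ → ℂ} {C R₀ : ℝ}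
    (hh : DifferentiableOn ℂ h {z | 0 ≤ z.im}) (hint : Integrable fun x : ℝ => h x)
    (hdecay : ∀ z : ℂ, 0 ≤ z.im → R₀ ≤ ‖z‖ → ‖h z‖ * ‖z‖ ^ 2 ≤ C) :
    ∫ x : ℝ, h x = 0 := by
  refine tendsto_nhds_unique
    (intervalIntegral_tendsto_integral hint tendsto_neg_atTop_atBot tendsto_id) ?_
  refine squeeze_zero_norm' ?_
    (tendsto_const_nhds.div_atTop tendsto_id : Tendsto (fun R => 4 * C / R) _ _)
  filter_upwards [eventually_ge_atTop R₀, eventually_gt_atTop 0] with R hR₀ hR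
  have hbound : ∀ z : ℂ, 0 ≤ z.im → R ≤ ‖z‖ → ‖h z‖ ≤ C / R ^ 2 := fun z hz hzR => by
    rw [le_div_iff₀ (by positivity)]
    calc ‖h z‖ * R ^ 2 ≤ ‖h z‖ * ‖z‖ ^ 2 := by gcongr
      _ ≤ C := hdecay z hz (hR₀.trans hzR)
  calc _ ≤ 4 * R * (C / R ^ 2) := norm_intervalIntegral_le_of_upper_bound hh hR hbound
    _ = 4 * C / R := by field_simp

/-- `(1 + I z)⁻¹ G z` minus the principal part `2 G(I) / (1 + z²)` of its pole at `I`; the only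
singularity left is at `-I`. -/
noncomputable def upperRegularPart (G : ℂ → ℂ) (z : ℂ) : ℂ :=
  -I * (dslope G I z + G I * (z + I)⁻¹)

lemma inv_one_add_I_mul_mul_eq {G : ℂ → ℂ} {z : ℂ} (hI : z ≠ I) (hnI : z ≠ -I) :
    (1 + I * z)⁻¹ * G z = upperRegularPart G z + 2 * G I * (1 + z ^ 2)⁻¹ := by
  have hsub : z - I ≠ 0 := sub_ne_zero.2 hI
  have hadd : z + I ≠ 0 := fun h => hnI (eq_neg_of_add_eq_zero_left h)
  rw [upperRegularPart, dslope_of_ne _ hI, slope_def_field,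
    show 1 + I * z = I * (z - I) by linear_combination I_mul_I,
    show 1 + z ^ 2 = (z - I) * (z + I) by linear_combination I_mul_I]
  field_simp
  linear_combination (G z * z + G z * I - 2 * I * G I) * I_mul_I

lemma differentiableOn_upperRegularPart {G : ℂ → ℂ}
    (hG : DifferentiableOn ℂ G {z | 0 ≤ z.im}) :
    DifferentiableOn ℂ (upperRegularPart G) {z | 0 ≤ z.im} := by
  have hnhds : {z : ℂ | 0 ≤ z.im} ∈ 𝓝 I :=
    mem_of_superset ((isOpen_lt continuous_const continuous_im).mem_nhds (by simp : (0 : ℝ) < I.im))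
      (ofPred_subset_ofPred.2 fun _ => le_of_lt)
  refine ((((differentiableOn_dslope hnhds).2 hG).add
    ((differentiableOn_const _).mul ((differentiableOn_id.add_const I).inv ?_))).const_mul _)
  rintro z (hz : 0 ≤ z.im) hzero
  have := congrArg im hzero
  simp only [add_im, id_eq, I_im, zero_im] at this
  linarith

lemma norm_upperRegularPart_mul_sq_le {G : ℂ → ℂ} {C : ℝ}
    (hbound : ∀ z : ℂ, 0 ≤ z.im → ‖G z‖ * (1 + ‖z‖) ≤ C) {z : ℂ} (hz : 0 ≤ z.im)
    (h2 : 2 ≤ ‖z‖) :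
    ‖upperRegularPart G z‖ * ‖z‖ ^ 2 ≤ 2 * C + 4 * ‖G I‖ := by
  have hI : z ≠ I := by rintro rfl; norm_num at h2
  have hnI : z ≠ -I := by rintro rfl; norm_num at h2
  have hlin : ‖z‖ / 2 ≤ ‖1 + I * z‖ := by
    have := norm_sub_norm_le (I * z) (-1)
    rw [norm_mul, norm_I, one_mul, norm_neg, norm_one, sub_neg_eq_add, add_comm] at this
    linarith
  have hquad : 3 / 4 * ‖z‖ ^ 2 ≤ ‖1 + z ^ 2‖ := by
    have := norm_sub_norm_le (z ^ 2) (-1)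
    rw [norm_pow, norm_neg, norm_one, sub_neg_eq_add, add_comm] at this
    nlinarith
  have hf : ‖(1 + I * z)⁻¹ * G z‖ * ‖z‖ ^ 2 ≤ 2 * C := by
    have hGz : ‖G z‖ * ‖z‖ ≤ C := by nlinarith [hbound z hz, norm_nonneg (G z)]
    have hC : 0 ≤ C := (mul_nonneg (norm_nonneg _) (by positivity)).trans (hbound z hz)
    rw [norm_mul, norm_inv, inv_mul_eq_div, div_mul_eq_mul_div, div_le_iff₀ (by linarith)]
    nlinarith [mul_le_mul_of_nonneg_right hGz (norm_nonneg z), mul_le_mul_of_nonneg_left hlin hC]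
  have hp : ‖2 * G I * (1 + z ^ 2)⁻¹‖ * ‖z‖ ^ 2 ≤ 4 * ‖G I‖ := by
    have hratio : ‖1 + z ^ 2‖⁻¹ * ‖z‖ ^ 2 ≤ 2 := by
      rw [inv_mul_le_iff₀ (by nlinarith)]
      nlinarith
    rw [norm_mul, norm_mul, norm_inv, Complex.norm_two, mul_assoc]
    calc 2 * ‖G I‖ * (‖1 + z ^ 2‖⁻¹ * ‖z‖ ^ 2) ≤ 2 * ‖G I‖ * 2 := by gcongr
      _ = 4 * ‖G I‖ := by ring
  calc ‖upperRegularPart G z‖ * ‖z‖ ^ 2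
      = ‖(1 + I * z)⁻¹ * G z - 2 * G I * (1 + z ^ 2)⁻¹‖ * ‖z‖ ^ 2 := by
        rw [inv_one_add_I_mul_mul_eq hI hnI, add_sub_cancel_right]
    _ ≤ _ := by nlinarith [norm_sub_le ((1 + I * z)⁻¹ * G z) (2 * G I * (1 + z ^ 2)⁻¹)]

lemma integrable_inv_one_add_I_mul_mul {g : ℝ → ℂ} {C : ℝ} (hg : Continuous g)
    (hbound : ∀ x : ℝ, ‖g x‖ * (1 + |x|) ≤ C) :
    Integrable fun x : ℝ => (1 + I * x)⁻¹ * g x := by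
  have hne : ∀ x : ℝ, 1 + I * x ≠ 0 := fun x h => by simpa using congrArg re h
  refine (integrable_inv_one_add_sq.const_mul C).mono'
    (((continuous_const.add (continuous_const.mul continuous_ofReal)).inv₀ hne).mul
      hg).aestronglyMeasurable (ae_of_all _ fun x => ?_)
  have hre : 1 ≤ ‖1 + I * x‖ := by simpa using abs_re_le_norm (1 + I * x)
  have him : |x| ≤ ‖1 + I * x‖ := by simpa using abs_im_le_norm (1 + I * x)
  rw [norm_mul, norm_inv, inv_mul_eq_div, div_le_iff₀ (by linarith), mul_assoc,
    ← div_eq_inv_mul, ← mul_div_assoc, le_div_iff₀ (by positivity)]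
  have hkey : 1 + x ^ 2 ≤ ‖1 + I * x‖ * (1 + |x|) := by nlinarith [sq_abs x, abs_nonneg x]
  calc ‖g x‖ * (1 + x ^ 2) ≤ ‖g x‖ * (1 + |x|) * ‖1 + I * x‖ := by nlinarith [norm_nonneg (g x)]
    _ ≤ C * ‖1 + I * x‖ := by gcongr; exact hbound x

theorem integral_inv_one_add_I_mul_mul_eq {G : ℂ → ℂ} {C : ℝ}
    (hG : DifferentiableOn ℂ G {z | 0 ≤ z.im})
    (hbound : ∀ z : ℂ, 0 ≤ z.im → ‖G z‖ * (1 + ‖z‖) ≤ C) :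
    ∫ x : ℝ, (1 + I * x)⁻¹ * G x = 2 * π * G I := by
  have hreal : ∀ x : ℝ, (x : ℂ) ∈ {z : ℂ | 0 ≤ z.im} := fun x => by simp
  have hsplit : ∀ x : ℝ,
      (1 + I * x)⁻¹ * G x = upperRegularPart G x + 2 * G I * ((1 + x ^ 2)⁻¹ : ℝ) := fun x => by
    rw [inv_one_add_I_mul_mul_eq (fun h => by simpa using congrArg im h)
      (fun h => by simpa using congrArg im h)]
    push_cast
    rfl
  have hf : Integrable fun x : ℝ => (1 + I * x)⁻¹ * G x :=
    integrable_inv_one_add_I_mul_mul (hG.continuousOn.comp_continuous continuous_ofReal hreal)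
      fun x => by simpa using hbound x (hreal x)
  have hpole : Integrable fun x : ℝ => 2 * G I * ((1 + x ^ 2)⁻¹ : ℝ) :=
    integrable_inv_one_add_sq.ofReal.const_mul _
  have hreg : Integrable fun x : ℝ => upperRegularPart G x :=
    (hf.sub hpole).congr (ae_of_all _ fun x => by
      simp only [Pi.sub_apply, hsplit, add_sub_cancel_right])
  rw [integral_congr_ae (ae_of_all _ hsplit), integral_add hreg hpole,
    integral_eq_zero_of_upper_decay (differentiableOn_upperRegularPart hG) hreg
      fun z hz h2 => norm_upperRegularPart_mul_sq_le hbound hz h2,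
    integral_const_mul, integral_complex_ofReal, integral_univ_inv_one_add_sq]
  ring

lemma re_ofReal_sub_I_mul (b : ℝ) (z : ℂ) : ((b : ℂ) - I * z).re = b + z.im := by simp

lemma norm_sub_I_mul_comparable {b : ℝ} (hb : 0 < b) {z : ℂ} (hz : 0 ≤ z.im) :
    min b 1 / 4 * (1 + ‖z‖) ≤ ‖(b : ℂ) - I * z‖ ∧ ‖(b : ℂ) - I * z‖ ≤ max b 1 * (1 + ‖z‖) := by
  have hre : b ≤ ‖(b : ℂ) - I * z‖ := by
    have := re_le_norm ((b : ℂ) - I * z)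
    rw [re_ofReal_sub_I_mul] at this
    linarith
  have hrev : ‖z‖ - b ≤ ‖(b : ℂ) - I * z‖ := by
    simpa [norm_sub_rev, abs_of_pos hb] using norm_sub_norm_le (I * z) (b : ℂ)
  have hfwd : ‖(b : ℂ) - I * z‖ ≤ b + ‖z‖ := by
    simpa [abs_of_pos hb] using norm_sub_le (b : ℂ) (I * z)
  constructor
  · nlinarith [min_le_left b 1, min_le_right b 1, norm_nonneg z]
  · nlinarith [le_max_left b 1, le_max_right b 1, norm_nonneg z]

lemma rpow_le_max_rpow_of_mem_Icc {l x h : ℝ} (hl : 0 < l) (hx : x ∈ Icc l h) (s : ℝ) :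
    x ^ s ≤ max (l ^ s) (h ^ s) := by
  rcases le_total 0 s with hs | hs
  · exact le_max_of_le_right (Real.rpow_le_rpow (hl.le.trans hx.1) hx.2 hs)
  · exact le_max_of_le_left (Real.rpow_le_rpow_of_nonpos hl hx.1 hs)

lemma norm_cpow_mul_cpow_neg_sub_one (x : ℂ) {y : ℂ} (hy : y ≠ 0) (s : ℝ) :
    ‖x ^ (s : ℂ) * y ^ (-(s : ℂ) - 1)‖ = (‖x‖ / ‖y‖) ^ s * ‖y‖⁻¹ := by
  have hy' : 0 < ‖y‖ := norm_pos_iff.2 hy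
  rw [norm_mul, show -(s : ℂ) - 1 = ((-s - 1 : ℝ) : ℂ) by push_cast; ring, norm_cpow_real,
    norm_cpow_real, Real.div_rpow (norm_nonneg x) hy'.le, Real.rpow_sub hy',
    Real.rpow_neg hy'.le, Real.rpow_one]
  field_simp

lemma exists_norm_cpow_mul_cpow_mul_le {b c : ℝ} (hb : 0 < b) (hc : 0 < c) (s : ℝ) :
    ∃ K : ℝ, ∀ z : ℂ, 0 ≤ z.im →
      ‖((c : ℂ) - I * z) ^ (s : ℂ) * ((b : ℂ) - I * z) ^ (-(s : ℂ) - 1)‖ * (1 + ‖z‖) ≤ K := by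
  have hαb : 0 < min b 1 / 4 := by positivity
  have hαc : 0 < min c 1 / 4 := by positivity
  refine ⟨max ((min c 1 / 4 / max b 1) ^ s) ((max c 1 / (min b 1 / 4)) ^ s) * (min b 1 / 4)⁻¹,
    fun z hz => ?_⟩
  obtain ⟨hc₁, hc₂⟩ := norm_sub_I_mul_comparable hc hz
  obtain ⟨hb₁, hb₂⟩ := norm_sub_I_mul_comparable hb hz
  have hw : 0 < ‖(b : ℂ) - I * z‖ := lt_of_lt_of_le (by positivity) hb₁
  have hratio : ‖(c : ℂ) - I * z‖ / ‖(b : ℂ) - I * z‖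
      ∈ Icc (min c 1 / 4 / max b 1) (max c 1 / (min b 1 / 4)) := by
    constructor
    · rw [div_le_div_iff₀ (by positivity) hw]
      nlinarith [mul_le_mul_of_nonneg_left hb₂ hαc.le,
        mul_le_mul_of_nonneg_right hc₁ (zero_le_one.trans (le_max_right b 1))]
    · rw [div_le_div_iff₀ hw hαb]
      nlinarith [mul_le_mul_of_nonneg_left hb₁ (zero_le_one.trans (le_max_right c 1)),
        mul_le_mul_of_nonneg_right hc₂ hαb.le]
  have hinv : ‖(b : ℂ) - I * z‖⁻¹ * (1 + ‖z‖) ≤ (min b 1 / 4)⁻¹ := by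
    rw [inv_mul_le_iff₀ hw, ← div_eq_mul_inv, le_div_iff₀ hαb]
    linarith
  rw [norm_cpow_mul_cpow_neg_sub_one _ (norm_pos_iff.1 hw) s, mul_assoc]
  exact mul_le_mul (rpow_le_max_rpow_of_mem_Icc (by positivity) hratio s) hinv
    (by positivity) (by positivity)

lemma re_mul_I_mul_sub_div_nonpos {a b : ℝ} (ha : 0 ≤ a) (hb : 0 < b) {z : ℂ} (hz : 0 ≤ z.im) :
    (a * (I * z - (1 + z ^ 2) / ((b : ℂ) - I * z))).re ≤ 0 := by
  have hne : (b : ℂ) - I * z ≠ 0 := fun h => by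
    have := congrArg re h
    rw [re_ofReal_sub_I_mul, zero_re] at this
    linarith
  -- the exponent equals `(I b z - 1) / (b - I z)`, whose real part is visibly nonpositive
  rw [show I * z - (1 + z ^ 2) / ((b : ℂ) - I * z) = (I * b * z - 1) / ((b : ℂ) - I * z) by
    field_simp; linear_combination -z ^ 2 * I_mul_I, re_ofReal_mul, div_re, ← add_div]
  have hnum : (I * b * z - 1).re * ((b : ℂ) - I * z).re + (I * b * z - 1).im * ((b : ℂ) - I * z).im
      = -((b * z.im + 1) * (b + z.im)) - b * z.re ^ 2 := by
    simp only [sub_re, mul_re, I_re, ofReal_re, zero_mul, I_im, ofReal_im, mul_zero, sub_self,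
      mul_im, one_mul, zero_add, zero_sub, one_re, sub_neg_eq_add, sub_im, one_im, sub_zero,
      mul_neg]
    ring
  refine mul_nonpos_of_nonneg_of_nonpos ha (div_nonpos_of_nonpos_of_nonneg ?_ (normSq_nonneg _))
  rw [hnum]
  nlinarith [sq_nonneg z.re, mul_nonneg hb.le hz]

/-- The integrand times `1 + I z`; the theorem is the case `s = (d - 3) / 2`, `b = q - 1`. -/
noncomputable def halfPlaneFactor (s b a : ℝ) (z : ℂ) : ℂ :=
  (1 - I * z) ^ (s : ℂ) * ((b : ℂ) - I * z) ^ (-(s : ℂ) - 1)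
    * exp (a * (I * z - (1 + z ^ 2) / ((b : ℂ) - I * z)))

lemma differentiableOn_halfPlaneFactor (s a : ℝ) {b : ℝ} (hb : 0 < b) :
    DifferentiableOn ℂ (halfPlaneFactor s b a) {z | 0 ≤ z.im} := by
  intro z (hz : 0 ≤ z.im)
  have hslit : ∀ c : ℝ, 0 < c → (c : ℂ) - I * z ∈ slitPlane := fun c hc =>
    mem_slitPlane_iff.2 (Or.inl (by rw [re_ofReal_sub_I_mul]; linarith))
  have hne : (b : ℂ) - I * z ≠ 0 := slitPlane_ne_zero (hslit b hb)
  have h1 := hslit 1 one_pos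
  rw [ofReal_one] at h1
  refine DifferentiableAt.differentiableWithinAt ?_
  unfold halfPlaneFactor
  refine (((by fun_prop : DifferentiableAt ℂ (fun z => 1 - I * z) z).cpow (by fun_prop) h1).mul
    ((by fun_prop : DifferentiableAt ℂ (fun z => (b : ℂ) - I * z) z).cpow (by fun_prop)
      (hslit b hb))).mul ?_
  have := (by fun_prop : DifferentiableAt ℂ (fun z => (1 + z ^ 2)) z).div
    (by fun_prop : DifferentiableAt ℂ (fun z => (b : ℂ) - I * z) z) hne
  fun_prop

lemma exists_norm_halfPlaneFactor_mul_le (s : ℝ) {a b : ℝ} (ha : 0 ≤ a) (hb : 0 < b) :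
    ∃ K : ℝ, ∀ z : ℂ, 0 ≤ z.im → ‖halfPlaneFactor s b a z‖ * (1 + ‖z‖) ≤ K := by
  obtain ⟨K, hK⟩ := exists_norm_cpow_mul_cpow_mul_le hb one_pos s
  refine ⟨K, fun z hz => ?_⟩
  have hexp := Real.exp_le_one_iff.2 (re_mul_I_mul_sub_div_nonpos ha hb hz)
  have hpow := hK z hz
  rw [ofReal_one] at hpow
  rw [halfPlaneFactor, norm_mul, norm_exp]
  calc _ ≤ ‖(1 - I * z) ^ (s : ℂ) * ((b : ℂ) - I * z) ^ (-(s : ℂ) - 1)‖ * 1 * (1 + ‖z‖) := by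
        gcongr
    _ ≤ K := by rwa [mul_one]

lemma halfPlaneFactor_I (s b a : ℝ) (hb : 0 ≤ b) :
    halfPlaneFactor s b a I = ((2 ^ s * (b + 1) ^ (-s - 1) * Real.exp (-a) : ℝ) : ℂ) := by
  have h2 : (1 : ℂ) - I * I = (2 : ℝ) := by rw [I_mul_I]; push_cast; ring
  have hb1 : (b : ℂ) - I * I = (b + 1 : ℝ) := by rw [I_mul_I]; push_cast; ring
  rw [halfPlaneFactor, h2, hb1, ofReal_mul, ofReal_mul, ofReal_cpow zero_le_two,
    ofReal_cpow (by linarith), ofReal_exp]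
  push_cast
  congr 2
  rw [I_sq, I_mul_I]
  ring

theorem contour_integral_p_two_general (d : ℕ) (q : ℝ) (hq : 1 < q)
    (a : ℝ) (ha : 0 ≤ a) :
    ∫ t : ℝ,
        (1 + Complex.I * (t : ℂ))⁻¹
          * (1 - Complex.I * (t : ℂ)) ^ (((d : ℂ) - 3) / 2)
          * ((q : ℂ) - 1 - Complex.I * (t : ℂ)) ^ (-((d : ℂ) - 1) / 2)
          * Complex.exp ((a : ℂ) *
              (Complex.I * (t : ℂ) - (1 + (t : ℂ) ^ 2) / ((q : ℂ) - 1 - Complex.I * (t : ℂ))))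
      = ((2 * Real.pi * 2 ^ (((d : ℝ) - 3) / 2) * q ^ (-((d : ℝ) - 1) / 2)
          * Real.exp (-a) : ℝ) : ℂ) := by
  have hb : 0 < q - 1 := by linarith
  obtain ⟨K, hK⟩ := exists_norm_halfPlaneFactor_mul_le (((d : ℝ) - 3) / 2) ha hb
  have hexp : -((((d : ℝ) - 3) / 2 : ℝ) : ℂ) - 1 = -((d : ℂ) - 1) / 2 := by push_cast; ring
  simp_rw [show ∀ t : ℂ, (1 + I * t)⁻¹ * (1 - I * t) ^ (((d : ℂ) - 3) / 2)
      * ((q : ℂ) - 1 - I * t) ^ (-((d : ℂ) - 1) / 2)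
      * exp (a * (I * t - (1 + t ^ 2) / ((q : ℂ) - 1 - I * t)))
      = (1 + I * t)⁻¹ * halfPlaneFactor (((d : ℝ) - 3) / 2) (q - 1) a t by
    intro t; rw [halfPlaneFactor, hexp]; push_cast; ring]
  rw [integral_inv_one_add_I_mul_mul_eq (differentiableOn_halfPlaneFactor _ _ hb) hK,
    halfPlaneFactor_I _ _ _ hb.le, sub_add_cancel,
    show -(((d : ℝ) - 3) / 2) - 1 = -((d : ℝ) - 1) / 2 by ring]
  push_cast
  ring

/-- evaluation, by contour deformation, of the one-dimensional
integral arising in the case `p = 2`. -/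
theorem contour_integral_p_two (d : ℕ) (hd : 2 ≤ d) (q : ℝ) (hq : 1 < q)
    (a : ℝ) (ha : 0 ≤ a) :
    ∫ t : ℝ,
        (1 + Complex.I * (t : ℂ))⁻¹
          * (1 - Complex.I * (t : ℂ)) ^ (((d : ℂ) - 3) / 2)
          * ((q : ℂ) - 1 - Complex.I * (t : ℂ)) ^ (-((d : ℂ) - 1) / 2)
          * Complex.exp ((a : ℂ) *
              (Complex.I * (t : ℂ) - (1 + (t : ℂ) ^ 2) / ((q : ℂ) - 1 - Complex.I * (t : ℂ))))
      = ((2 * Real.pi * 2 ^ (((d : ℝ) - 3) / 2) * q ^ (-((d : ℝ) - 1) / 2)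
          * Real.exp (-a) : ℝ) : ℂ) :=
  contour_integral_p_two_general d q hq a ha
end

section
/- Let d ≥ 2 and let q, r ∈ [2,∞) be finite exponents satisfying 2/r + (d-1)/q = (d-1)/2. For a ≥ 0 define J(a) = ∫_ℝ (1+it)^{-(r/(4q))(d-1)(q-2)} (1-it)^{-(r/(4q))(d-1)(q-2) + (d-1)/2} (q-1-it)^{-(d-1)/2} exp(a(it - (1+t²)/(q-1-it))) dt, with principal-branch complex powers. Then for every a ≥ 0: J(a) = 2π · 2^{(d-3)/2} · q^{-(d-1)/2} · e^{-a}. In particular J(a) is a constant multiple of e^{-a}, so radial Gaussians satisfy the Euler–Lagrange equation for the L² → L^r_t L^q_x Strichartz inequalities for all admissible exponent pairs. -/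
/-!
Put `z = 1 + it` and `p = (d - 1) / 2`. Admissibility makes the exponent of `1 + it` equal to
`-1`, and the integrand becomes `N(z) / (z (2 - z))` with
`N(z) = (2 - z)^p (q - z)^(-p) exp (a (z (q - 1) - q) / (q - z))`.
On the line `Re z = 1` we have `z (2 - z) = 1 + t²`, so the pole part `N(0) / (z (2 - z))`
integrates to `π N(0) = π 2^p q^(-p) e^(-a)`. The remainder `(N(z) - N(0)) / (z (2 - z))` is
holomorphic on `Re z < 2` and, since `|N| ≤ (q - 1)^p` on `Re z ≤ 1`, it is `O(|z|⁻²)` there;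
moving the line of integration to `Re z = -S` and letting `S → ∞` shows that its integral vanishes.
-/

open MeasureTheory Complex Filter Topology Real

lemma inv_sq_add_sq_eq (c y : ℝ) (hc : c ≠ 0) :
    (c ^ 2 + y ^ 2)⁻¹ = (c ^ 2)⁻¹ * (1 + (c⁻¹ * y) ^ 2)⁻¹ := by
  field_simp

lemma integrable_inv_sq_add_sq {c : ℝ} (hc : c ≠ 0) :
    Integrable fun y : ℝ => (c ^ 2 + y ^ 2)⁻¹ := by
  simp_rw [inv_sq_add_sq_eq c _ hc]
  exact (integrable_inv_one_add_sq.comp_mul_left' (inv_ne_zero hc)).const_mul _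

lemma integral_univ_inv_sq_add_sq {c : ℝ} (hc : c ≠ 0) :
    ∫ y : ℝ, (c ^ 2 + y ^ 2)⁻¹ = π / |c| := by
  simp_rw [inv_sq_add_sq_eq c _ hc]
  rw [integral_const_mul, Measure.integral_comp_mul_left (fun y => (1 + y ^ 2)⁻¹),
    integral_univ_inv_one_add_sq, smul_eq_mul]
  simp only [inv_inv, ← sq_abs c]
  field_simp

section VerticalLine

variable {g : ℂ → ℂ} {x₀ C : ℝ}

lemma norm_le_div_sq_add_sq (hbound : ∀ z : ℂ, z.re ≤ x₀ → z ≠ 0 → ‖g z‖ ≤ C / ‖z‖ ^ 2)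
    {x y : ℝ} (hx : x ≤ x₀) (hxy : (x : ℂ) + y * I ≠ 0) :
    ‖g (x + y * I)‖ ≤ C / (x ^ 2 + y ^ 2) := by
  simpa [Complex.sq_norm, normSq_add_mul_I] using hbound _ (by simpa using hx) hxy

lemma integrable_vertical_line (hg : DifferentiableOn ℂ g {z | z.re ≤ x₀})
    (hbound : ∀ z : ℂ, z.re ≤ x₀ → z ≠ 0 → ‖g z‖ ≤ C / ‖z‖ ^ 2)
    {x : ℝ} (hx : x ≤ x₀) (hx0 : x ≠ 0) :
    Integrable fun y : ℝ => g (x + y * I) := by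
  refine ((integrable_inv_sq_add_sq hx0).const_mul C).mono' ?_ (ae_of_all _ fun y => ?_)
  · exact (hg.continuousOn.comp_continuous (by fun_prop)
      fun y => by simpa using hx).aestronglyMeasurable
  · have hxy : (x : ℂ) + y * I ≠ 0 := fun h => hx0 (by simpa using congrArg re h)
    simpa [div_eq_mul_inv] using norm_le_div_sq_add_sq hbound hx hxy

lemma norm_integral_vertical_line_le
    (hbound : ∀ z : ℂ, z.re ≤ x₀ → z ≠ 0 → ‖g z‖ ≤ C / ‖z‖ ^ 2)
    {x : ℝ} (hx : x ≤ x₀) (hx0 : x ≠ 0) :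
    ‖∫ y : ℝ, g (x + y * I)‖ ≤ C * π / |x| := by
  refine (norm_integral_le_of_norm_le ((integrable_inv_sq_add_sq hx0).const_mul C)
    (ae_of_all _ fun y => ?_)).trans_eq ?_
  · have hxy : (x : ℂ) + y * I ≠ 0 := fun h => hx0 (by simpa using congrArg re h)
    simpa [div_eq_mul_inv] using norm_le_div_sq_add_sq hbound hx hxy
  · rw [integral_const_mul, integral_univ_inv_sq_add_sq hx0, mul_div_assoc]

lemma tendsto_integral_horizontal_segment
    (hbound : ∀ z : ℂ, z.re ≤ x₀ → z ≠ 0 → ‖g z‖ ≤ C / ‖z‖ ^ 2) {x : ℝ} (hx : x ≤ x₀) :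
    Tendsto (fun T : ℝ => ∫ t in x..x₀, g (t + T * I)) (cocompact ℝ) (𝓝 0) := by
  have hsq : Tendsto (fun T : ℝ => T ^ 2) (cocompact ℝ) atTop := by
    refine ((tendsto_pow_atTop two_ne_zero).comp tendsto_norm_cocompact_atTop).congr fun T => ?_
    simp
  refine squeeze_zero_norm' ?_ (by simpa using (hsq.const_div_atTop C).mul_const |x₀ - x|)
  filter_upwards [hsq.eventually_gt_atTop 0] with T hT
  refine intervalIntegral.norm_integral_le_of_norm_le_const fun t ht => ?_
  have htT : (t : ℂ) + T * I ≠ 0 := fun h => by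
    have hT0 : T = 0 := by simpa using congrArg im h
    simp [hT0] at hT
  rw [Set.uIoc_of_le hx] at ht
  have hgt := norm_le_div_sq_add_sq hbound ht.2 htT
  have hC : 0 ≤ C := by
    simpa using (le_div_iff₀ (by positivity)).mp ((norm_nonneg _).trans hgt)
  exact hgt.trans (div_le_div_of_nonneg_left hC hT (by nlinarith))

lemma integral_vertical_line_eq (hg : DifferentiableOn ℂ g {z | z.re ≤ x₀})
    (hbound : ∀ z : ℂ, z.re ≤ x₀ → z ≠ 0 → ‖g z‖ ≤ C / ‖z‖ ^ 2)
    {x : ℝ} (hx : x ≤ x₀) (hx0 : x ≠ 0) (hx₀ : x₀ ≠ 0) :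
    ∫ y : ℝ, g (x₀ + y * I) = ∫ y : ℝ, g (x + y * I) := by
  have hrect (T : ℝ) : (∫ t in x..x₀, g (t + (-T : ℝ) * I)) - (∫ t in x..x₀, g (t + T * I)) +
      I • (∫ y in (-T)..T, g (x₀ + y * I)) - I • (∫ y in (-T)..T, g (x + y * I)) = 0 := by
    have hsub : Set.uIcc x x₀ ×ℂ Set.uIcc (-T) T ⊆ {z | z.re ≤ x₀} := fun z hz =>
      (Set.uIcc_of_le hx ▸ hz.1).2
    simpa using integral_boundary_rect_eq_zero_of_differentiableOn g
      (x + (-T : ℝ) * I) (x₀ + T * I) (by simpa using hg.mono hsub)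
  have hvert {x' : ℝ} (hx' : x' ≤ x₀) (hx'0 : x' ≠ 0) :
      Tendsto (fun T : ℝ => ∫ y in (-T)..T, g (x' + y * I)) atTop
        (𝓝 (∫ y : ℝ, g (x' + y * I))) :=
    intervalIntegral_tendsto_integral (integrable_vertical_line hg hbound hx' hx'0)
      tendsto_neg_atTop_atBot tendsto_id
  have hhor := tendsto_integral_horizontal_segment hbound hx
  have hlim := (((hhor.comp (tendsto_neg_atTop_atBot.mono_right atBot_le_cocompact)).sub
    (hhor.comp atTop_le_cocompact)).add ((hvert le_rfl hx₀).const_smul I)).sub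
    ((hvert hx hx0).const_smul I)
  have := tendsto_nhds_unique hlim (tendsto_const_nhds.congr fun T => (hrect T).symm)
  simpa [sub_eq_zero, I_ne_zero] using this

theorem integral_vertical_line_eq_zero (hg : DifferentiableOn ℂ g {z | z.re ≤ x₀})
    (hbound : ∀ z : ℂ, z.re ≤ x₀ → z ≠ 0 → ‖g z‖ ≤ C / ‖z‖ ^ 2) (hx₀ : x₀ ≠ 0) :
    ∫ y : ℝ, g (x₀ + y * I) = 0 := by
  refine norm_le_zero_iff.mp
    (ge_of_tendsto ((tendsto_const_nhds (x := C * π)).div_atTop tendsto_id) ?_)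
  filter_upwards [eventually_gt_atTop 0, eventually_ge_atTop (-x₀)] with S hS hSx₀
  rw [integral_vertical_line_eq hg hbound (x := -S) (by linarith) (by linarith) hx₀]
  simpa [abs_of_pos hS] using
    norm_integral_vertical_line_le hbound (x := -S) (by linarith) (by linarith)

end VerticalLine

lemma Complex.sub_mem_slitPlane {c : ℝ} {z : ℂ} (h : z.re < c) : (c : ℂ) - z ∈ slitPlane :=
  mem_slitPlane_iff.mpr (Or.inl (by simpa using h))

lemma Complex.norm_le_norm_two_sub {z : ℂ} (hz : z.re ≤ 1) : ‖z‖ ≤ ‖2 - z‖ := by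
  rw [← sq_le_sq₀ (norm_nonneg _) (norm_nonneg _), Complex.sq_norm, Complex.sq_norm,
    normSq_apply, normSq_apply]
  simp only [sub_re, sub_im, re_ofNat, im_ofNat]
  nlinarith

namespace MixedNormContour

noncomputable def numerator (q a p : ℝ) (z : ℂ) : ℂ :=
  (2 - z) ^ (p : ℂ) * (q - z) ^ (-(p : ℂ)) * exp (a * ((z * (q - 1) - q) / (q - z)))

noncomputable def remainder (q a p : ℝ) (z : ℂ) : ℂ :=
  dslope (numerator q a p) 0 z / (2 - z)

variable {q a p : ℝ} {z : ℂ}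

lemma differentiableOn_numerator (hq : 2 ≤ q) :
    DifferentiableOn ℂ (numerator q a p) {z | z.re < 2} := by
  intro z hz
  have h2 : (2 : ℂ) - z ∈ slitPlane := by simpa using sub_mem_slitPlane (c := 2) hz
  have hq' : (q : ℂ) - z ∈ slitPlane := sub_mem_slitPlane (by simp at hz; linarith)
  refine DifferentiableAt.differentiableWithinAt ?_
  unfold numerator
  have := slitPlane_ne_zero hq'
  fun_prop (disch := assumption)

lemma re_exponent_nonpos (hq : 2 ≤ q) (hz : z.re ≤ 1) :
    ((z * (q - 1) - q) / (q - z)).re ≤ 0 := by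
  rw [div_re]
  have hnum : (z * (q - 1) - q).re * ((q : ℂ) - z).re + (z * (q - 1) - q).im * ((q : ℂ) - z).im
      ≤ 0 := by
    have hA : 0 ≤ q - z.re * (q - 1) := by nlinarith
    have hB : 0 ≤ q - z.re := by linarith
    simp only [sub_re, sub_im, mul_re, mul_im, ofReal_re, ofReal_im, one_re, one_im]
    nlinarith [mul_nonneg hA hB, mul_nonneg (sq_nonneg z.im) (by linarith : (0 : ℝ) ≤ q - 1)]
  rw [← add_div]
  exact div_nonpos_of_nonpos_of_nonneg hnum (normSq_nonneg _)

lemma norm_two_sub_le (hq : 2 ≤ q) (hz : z.re ≤ 1) : ‖2 - z‖ ≤ (q - 1) * ‖(q : ℂ) - z‖ := by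
  have hqz : q - 1 ≤ ‖(q : ℂ) - z‖ := by
    have := re_le_norm ((q : ℂ) - z)
    simp only [sub_re, ofReal_re] at this
    linarith
  calc ‖2 - z‖ = ‖((q : ℂ) - z) - ((q - 2 : ℝ) : ℂ)‖ := by push_cast; ring_nf
    _ ≤ ‖(q : ℂ) - z‖ + (q - 2) := by
        refine (norm_sub_le _ _).trans_eq ?_
        rw [norm_real, Real.norm_of_nonneg (by linarith)]
    _ ≤ (q - 1) * ‖(q : ℂ) - z‖ := by nlinarith

lemma norm_numerator_le (hq : 2 ≤ q) (ha : 0 ≤ a) (hp : 0 ≤ p) (hz : z.re ≤ 1) :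
    ‖numerator q a p z‖ ≤ (q - 1) ^ p := by
  have h2 : (2 : ℂ) - z ≠ 0 :=
    slitPlane_ne_zero (by simpa using sub_mem_slitPlane (c := 2) (z := z) (by linarith))
  have hqz : (q : ℂ) - z ≠ 0 := slitPlane_ne_zero (sub_mem_slitPlane (by linarith))
  have hexp : ‖exp (a * ((z * (q - 1) - q) / (q - z)))‖ ≤ 1 := by
    rw [norm_exp, Real.exp_le_one_iff, re_ofReal_mul]
    exact mul_nonpos_of_nonneg_of_nonpos ha (re_exponent_nonpos hq hz)
  calc ‖numerator q a p z‖
      ≤ ‖2 - z‖ ^ p * ‖(q : ℂ) - z‖ ^ (-p) * 1 := by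
        rw [numerator, norm_mul, norm_mul, norm_cpow_of_ne_zero h2, norm_cpow_of_ne_zero hqz]
        simp only [ofReal_re, ofReal_im, neg_re, neg_im, neg_zero, mul_zero, Real.exp_zero,
          div_one]
        gcongr
    _ = (‖2 - z‖ / ‖(q : ℂ) - z‖) ^ p := by
        rw [mul_one, Real.rpow_neg (norm_nonneg _), Real.div_rpow (norm_nonneg _) (norm_nonneg _),
          div_eq_mul_inv]
    _ ≤ (q - 1) ^ p := by
        gcongr
        rw [div_le_iff₀ (norm_pos_iff.mpr hqz)]
        exact norm_two_sub_le hq hz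

lemma differentiableOn_remainder (hq : 2 ≤ q) :
    DifferentiableOn ℂ (remainder q a p) {z | z.re ≤ 1} := by
  have hopen : IsOpen {z : ℂ | z.re < 2} := isOpen_lt continuous_re continuous_const
  refine DifferentiableOn.mono (t := {z : ℂ | z.re < 2}) ?_
    fun z (hz : z.re ≤ 1) => show z.re < 2 by linarith
  refine ((differentiableOn_dslope (hopen.mem_nhds (by simp))).mpr
    (differentiableOn_numerator hq)).div (by fun_prop) fun z hz => ?_
  exact slitPlane_ne_zero (by simpa using sub_mem_slitPlane (c := 2) hz)

lemma remainder_eq (hz : z ≠ 0) :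
    remainder q a p z = (numerator q a p z - numerator q a p 0) / (z * (2 - z)) := by
  rw [remainder, dslope_of_ne _ hz, slope_def_field, sub_zero, div_div]

lemma norm_remainder_le (hq : 2 ≤ q) (ha : 0 ≤ a) (hp : 0 ≤ p) (hz : z.re ≤ 1) (hz0 : z ≠ 0) :
    ‖remainder q a p z‖ ≤ 2 * (q - 1) ^ p / ‖z‖ ^ 2 := by
  have hnum : ‖numerator q a p z - numerator q a p 0‖ ≤ 2 * (q - 1) ^ p :=
    calc ‖numerator q a p z - numerator q a p 0‖
        ≤ ‖numerator q a p z‖ + ‖numerator q a p 0‖ := norm_sub_le _ _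
      _ ≤ (q - 1) ^ p + (q - 1) ^ p := by
        gcongr <;> exact norm_numerator_le hq ha hp (by simp [hz])
      _ = 2 * (q - 1) ^ p := by ring
  have hz0' : 0 < ‖z‖ := norm_pos_iff.mpr hz0
  rw [remainder_eq hz0, norm_div, norm_mul, sq]
  exact div_le_div₀ ((norm_nonneg _).trans hnum) hnum (mul_pos hz0' hz0')
    (mul_le_mul_of_nonneg_left (norm_le_norm_two_sub hz) hz0'.le)

lemma integrable_remainder (hq : 2 ≤ q) (ha : 0 ≤ a) (hp : 0 ≤ p) :
    Integrable fun t : ℝ => remainder q a p (1 + t * I) := by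
  simpa using integrable_vertical_line (x₀ := 1) (differentiableOn_remainder hq)
    (fun z hz hz0 => norm_remainder_le hq ha hp hz hz0) le_rfl one_ne_zero

theorem integral_remainder_eq_zero (hq : 2 ≤ q) (ha : 0 ≤ a) (hp : 0 ≤ p) :
    ∫ t : ℝ, remainder q a p (1 + t * I) = 0 := by
  simpa using integral_vertical_line_eq_zero (x₀ := 1) (differentiableOn_remainder hq)
    (fun z hz hz0 => norm_remainder_le hq ha hp hz hz0) one_ne_zero

lemma numerator_zero (hq : 0 < q) :
    numerator q a p 0 = ((2 ^ p * q ^ (-p) * Real.exp (-a) : ℝ) : ℂ) := by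
  have hexp : (a : ℂ) * ((0 * (q - 1) - q) / (q - 0)) = ((-a : ℝ) : ℂ) := by
    have : (q : ℂ) ≠ 0 := ofReal_ne_zero.mpr hq.ne'
    push_cast
    field_simp
    ring
  rw [numerator, hexp, ofReal_mul, ofReal_mul, ofReal_cpow zero_le_two, ofReal_cpow hq.le,
    ofReal_exp]
  push_cast
  ring_nf

lemma integrand_eq (hq : 1 < q) (t : ℝ) :
    (1 + I * t) ^ ((-1 : ℝ) : ℂ) * (1 - I * t) ^ ((-1 + p : ℝ) : ℂ)
        * ((q : ℂ) - 1 - I * t) ^ (-(p : ℂ))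
        * Complex.exp (a * (I * t - (1 + (t : ℂ) ^ 2) / (q - 1 - I * t)))
      = numerator q a p 0 * (((1 + t ^ 2)⁻¹ : ℝ) : ℂ) + remainder q a p (1 + t * I) := by
  set z : ℂ := 1 + t * I with hz
  have hz0 : z ≠ 0 := fun h => by simpa [hz] using congrArg re h
  have h2z : (2 : ℂ) - z ≠ 0 := fun h => by simpa [hz] using congrArg re (sub_eq_zero.mp h)
  have hqz : (q : ℂ) - z ≠ 0 := fun h => by
    have := congrArg re (sub_eq_zero.mp h)
    simp [hz] at this
    linarith
  have hden : (1 : ℂ) + t ^ 2 = z * (2 - z) := by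
    rw [hz]
    linear_combination (t : ℂ) ^ 2 * I_sq
  rw [show 1 + I * t = z by ring, show 1 - I * t = 2 - z by ring,
    show (q : ℂ) - 1 - I * t = q - z by ring, show I * (t : ℂ) = z - 1 by ring, hden,
    remainder_eq hz0, ofReal_neg, ofReal_one, cpow_neg_one, ofReal_add, ofReal_neg,
    ofReal_one, cpow_add _ _ h2z, cpow_neg_one, ofReal_inv, ofReal_add, ofReal_one, ofReal_pow,
    hden]
  have hexp : z - 1 - z * (2 - z) / (q - z) = (z * (q - 1) - q) / (q - z) := by
    field_simp
    ring
  rw [hexp]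
  unfold numerator
  field_simp
  ring

end MixedNormContour

lemma admissible_exponent_eq {D q r : ℝ} (hq : 0 < q) (hr : 0 < r)
    (hadm : 2 / r + D / q = D / 2) : -(r / (4 * q)) * (D * (q - 2)) = -1 := by
  field_simp at hadm ⊢
  linarith

open MixedNormContour

/-- the contour integral `J(a)` arising in the mixed-norm
(Strichartz) case is a constant multiple of `e^{-a}` for every admissible pair
`(q, r)`; hence radial Gaussians satisfy the Euler-Lagrange equation for the
`L² → L^r_t L^q_x` Strichartz inequalities. -/
theorem mixed_norm_contour_integral (d : ℕ) (hd : 2 ≤ d) (q r : ℝ)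
    (hq : 2 ≤ q) (hr : 2 ≤ r)
    (hadm : 2 / r + ((d : ℝ) - 1) / q = ((d : ℝ) - 1) / 2)
    (a : ℝ) (ha : 0 ≤ a) :
    ∫ t : ℝ,
        (1 + Complex.I * (t : ℂ)) ^ ((-(r / (4 * q)) * (((d : ℝ) - 1) * (q - 2)) : ℝ) : ℂ)
          * (1 - Complex.I * (t : ℂ)) ^
              ((-(r / (4 * q)) * (((d : ℝ) - 1) * (q - 2)) + ((d : ℝ) - 1) / 2 : ℝ) : ℂ)
          * ((q : ℂ) - 1 - Complex.I * (t : ℂ)) ^ (-((d : ℂ) - 1) / 2)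
          * Complex.exp ((a : ℂ) *
              (Complex.I * (t : ℂ) - (1 + (t : ℂ) ^ 2) / ((q : ℂ) - 1 - Complex.I * (t : ℂ))))
      = ((2 * Real.pi * 2 ^ (((d : ℝ) - 3) / 2) * q ^ (-((d : ℝ) - 1) / 2)
          * Real.exp (-a) : ℝ) : ℂ) := by
  have hq0 : 0 < q := by linarith
  have hD : 0 < (d : ℝ) - 1 := by
    have : (2 : ℝ) ≤ d := by exact_mod_cast hd
    linarith
  rw [admissible_exponent_eq hq0 (by linarith) hadm,
    show -((d : ℂ) - 1) / 2 = -((((d : ℝ) - 1) / 2 : ℝ) : ℂ) by push_cast; ring]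
  set p := ((d : ℝ) - 1) / 2
  have hint : Integrable fun t : ℝ => numerator q a p 0 * (((1 + t ^ 2)⁻¹ : ℝ) : ℂ) :=
    (integrable_inv_one_add_sq.ofReal (𝕜 := ℂ)).const_mul _
  have hp0 : 0 ≤ p := by positivity
  rw [integral_congr_ae (ae_of_all _ (integrand_eq (a := a) (by linarith))),
    integral_add hint (integrable_remainder hq ha hp0), integral_remainder_eq_zero hq ha hp0,
    add_zero, integral_const_mul, integral_complex_ofReal, integral_univ_inv_one_add_sq,
    numerator_zero hq0, ← ofReal_mul, ofReal_inj,
    show p = ((d : ℝ) - 3) / 2 + 1 by ring, Real.rpow_add two_pos, Real.rpow_one]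
  ring_nf
end
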